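/- If f is holomorphic near a fixed point z₀ with f(z₀) = z₀, U, W are sets with z₀ ∈ f^l(W), z_l ∈ W, f^l(z_l) = z₀, z_l ≠ z₀, g is an inverse branch of f fixing z₀ with z₀ its unique periodic point, h is the inverse branch of f^l with h(z₀) = z_l, and w_n is a fixed point of h ∘ g^{n−l} with n ≥ 2l, then w_n is a periodic point of f of exact period n. -/

import Mathlib

/-!
Since `f` undoes `g`, the relation `f^[l] w = g^[n-l] w` forces the forward orbit of `w` to
retrace the backward `g`-orbit: `f^[j] w = g^[n-j] w` for `l ≤ j ≤ n`, so `w` has period `n`.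
A smaller minimal period `p` would divide `n`, hence `p ≤ n/2` and `n - p ≥ l`, making `w` a
`g`-periodic point, i.e. `w = z₀`; but then `w = h (g^[n-l] z₀) = h z₀ = z_l ≠ z₀`.
-/

open Function Set

theorem Set.LeftInvOn.iterate {α : Type*} {f g : α → α} {s : Set α} (hfg : LeftInvOn f g s)
    (hg : MapsTo g s s) (n : ℕ) : LeftInvOn f^[n] g^[n] s := by
  induction n with
  | zero => exact fun _ _ => rfl
  | succ n ih =>
    intro x hx
    rw [iterate_succ_apply, iterate_succ_apply', hfg (hg.iterate n hx), ih hx]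

theorem Set.LeftInvOn.iterate_apply_iterate_of_le {α : Type*} {f g : α → α} {s : Set α}
    (hfg : LeftInvOn f g s) (hg : MapsTo g s s) {x : α} (hx : x ∈ s) {i m : ℕ} (him : i ≤ m) :
    f^[i] (g^[m] x) = g^[m - i] x := by
  obtain ⟨k, rfl⟩ := Nat.exists_eq_add_of_le him
  rw [iterate_add_apply, Nat.add_sub_cancel_left, hfg.iterate hg i (hg.iterate k hx)]

theorem Set.LeftInvOn.iterate_eq_iterate_sub {α : Type*} {f g : α → α} {s : Set α}
    (hfg : LeftInvOn f g s) (hg : MapsTo g s s) {x : α} (hx : x ∈ s) {l n j : ℕ}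
    (hfl : f^[l] x = g^[n - l] x) (hlj : l ≤ j) (hjn : j ≤ n) :
    f^[j] x = g^[n - j] x := by
  rw [← Nat.sub_add_cancel hlj, iterate_add_apply, hfl,
    hfg.iterate_apply_iterate_of_le hg hx (by omega)]
  congr 1
  omega

theorem Function.IsPeriodicPt.two_mul_minimalPeriod_le {α : Type*} {f : α → α} {x : α} {n : ℕ}
    (hx : IsPeriodicPt f n x) (hlt : minimalPeriod f x < n) : 2 * minimalPeriod f x ≤ n := by
  obtain ⟨k, rfl⟩ := hx.minimalPeriod_dvd
  have hk : 2 ≤ k := by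
    by_contra!
    interval_cases k <;> simp at hlt
  rw [mul_comm]
  exact Nat.mul_le_mul_left _ hk

theorem stmt_15_general (f g h : ℂ → ℂ) (V W : Set ℂ) (z₀ zl w : ℂ) (l n : ℕ)
    (hn : 2 * l ≤ n)
    (hWV : W ⊆ V)
    (hgmaps : Set.MapsTo g V V) (hfg : ∀ z ∈ V, f (g z) = z) (hgz : g z₀ = z₀)
    (huniq : ∀ z ∈ V, ∀ k : ℕ, 0 < k → g^[k] z = z → z = z₀)
    (hzl : zl ≠ z₀) (hh0 : h z₀ = zl)
    (hwW : w ∈ W) (hfixw : h (g^[n - l] w) = w)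
    (hfh : f^[l] (h (g^[n - l] w)) = g^[n - l] w) :
    f^[n] w = w ∧ ∀ q : ℕ, 0 < q → q < n → f^[q] w ≠ w := by
  have hwV : w ∈ V := hWV hwW
  have hfl : f^[l] w = g^[n - l] w := by rwa [hfixw] at hfh
  have hforward {j : ℕ} := LeftInvOn.iterate_eq_iterate_sub hfg hgmaps hwV hfl (j := j)
  have hfn : IsPeriodicPt f n w := by
    simpa [IsPeriodicPt, IsFixedPt] using hforward (by omega) le_rfl
  refine ⟨hfn, fun q hq hqn (hfq : IsPeriodicPt f q w) => hzl ?_⟩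
  set p := minimalPeriod f w
  have hp : 2 * p ≤ n := hfn.two_mul_minimalPeriod_le ((hfq.minimalPeriod_le hq).trans_lt hqn)
  have hgp : g^[p] w = w := calc
    g^[p] w = f^[n - p] w := by rw [hforward (by omega) (by omega), Nat.sub_sub_self (by omega)]
    _ = w := hfn.sub iterate_minimalPeriod
  obtain rfl : w = z₀ := huniq w hwV p (hfq.minimalPeriod_pos hq) hgp
  simpa only [iterate_fixed hgz, hh0] using hfixw

/-- Homoclinic construction: with `g` an inverse branch of `f` on `V` fixing `z₀` whose
unique periodic point in `V` is `z₀`, `h` an inverse branch of `f^[l]` sending `z₀` to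
`z_l ≠ z₀`, and `w ∈ W` a fixed point of `h ∘ g^[n−l]` with `n ≥ 2l`, the point `w` is a
periodic point of `f` of exact period `n`. -/
theorem stmt_15 (f g h : ℂ → ℂ) (V U W : Set ℂ) (z₀ zl w : ℂ) (l n : ℕ)
    (hl : 1 ≤ l) (hn : 2 * l ≤ n)
    (hfz : f z₀ = z₀) (hz₀V : z₀ ∈ V) (hWV : W ⊆ V)
    (hgmaps : Set.MapsTo g V V) (hfg : ∀ z ∈ V, f (g z) = z) (hgz : g z₀ = z₀)
    (huniq : ∀ z ∈ V, ∀ k : ℕ, 0 < k → g^[k] z = z → z = z₀)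
    (hzl : zl ≠ z₀) (hh0 : h z₀ = zl)
    (hwW : w ∈ W) (hfixw : h (g^[n - l] w) = w)
    (hfh : f^[l] (h (g^[n - l] w)) = g^[n - l] w) :
    f^[n] w = w ∧ ∀ q : ℕ, 0 < q → q < n → f^[q] w ≠ w :=
  stmt_15_general f g h V W z₀ zl w l n hn hWV hgmaps hfg hgz huniq hzl hh0 hwW hfixw hfh
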